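/- With c the leading coefficient of F and α_n = log(F(x_n)/(c·x_n^d)), one has 0 ≤ α_n ≤ (F(1) − c)/(c·x_n) for all n ≥ 1; in particular α_n → 0 as n → ∞. -/

import Mathlib

/-!
For `q ≥ 1`, nonnegativity of the coefficients gives
`1 + c q^d ≤ F(q) ≤ c q^d + (F(1) - c) q^(d-1)`, so `r = F(q) / (c q^d)` lies in
`[1, 1 + (F(1) - c) / (c q)]`, and `0 ≤ log r ≤ r - 1` bounds `α n`.
Since `F ≥ 2` on `[1, ∞)`, the recurrence `x (n+2) * x n = x (n+1)^2 * F (x (n+1))` first makes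
`x` nondecreasing and then gives `x (n+2) ≥ 2 x (n+1)`; hence `x n → ∞` and `α n → 0`.
-/

open Filter Polynomial Finset

namespace Polynomial

theorem leadingCoeff_pos_of_coeff_nonneg {S : Type*} [Semiring S] [PartialOrder S] {p : S[X]}
    (hp : ∀ i, 0 ≤ p.coeff i) (hp0 : p ≠ 0) : 0 < p.leadingCoeff :=
  (hp _).lt_of_ne' (leadingCoeff_ne_zero.mpr hp0)

variable {R : Type*} {F : ℤ[X]}

theorem aeval_eq_sum_coeff_mul_pow [CommRing R] (q : R) :
    aeval q F = ∑ i ∈ range (F.natDegree + 1), (F.coeff i : R) * q ^ i := by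
  simp only [aeval_eq_sum_range, zsmul_eq_mul]

section OrderedRing

variable [CommRing R] [LinearOrder R] [IsStrictOrderedRing R]

theorem coeff_zero_add_leadingCoeff_mul_pow_le_aeval (hF : ∀ i, 0 ≤ F.coeff i)
    (hd : 0 < F.natDegree) {q : R} (hq : 0 ≤ q) :
    (F.coeff 0 : R) + F.leadingCoeff * q ^ F.natDegree ≤ aeval q F := by
  have hsub : ({0, F.natDegree} : Finset ℕ) ⊆ range (F.natDegree + 1) := by
    intro i hi
    simp only [mem_insert, mem_singleton] at hi
    rcases hi with rfl | rfl <;> simp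
  calc (F.coeff 0 : R) + F.leadingCoeff * q ^ F.natDegree
      = ∑ i ∈ {0, F.natDegree}, (F.coeff i : R) * q ^ i := by
        rw [sum_pair hd.ne, pow_zero, mul_one, leadingCoeff]
    _ ≤ aeval q F := by
        rw [aeval_eq_sum_coeff_mul_pow]
        exact sum_le_sum_of_subset_of_nonneg hsub fun i _ _ ↦
          mul_nonneg (by exact_mod_cast hF i) (pow_nonneg hq i)

theorem aeval_le_leadingCoeff_mul_pow_add (hF : ∀ i, 0 ≤ F.coeff i) {q : R} (hq : 1 ≤ q) :
    aeval q F ≤ F.leadingCoeff * q ^ F.natDegree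
      + ((F.eval 1 : ℤ) - F.leadingCoeff) * q ^ (F.natDegree - 1) := by
  have heval : ((F.eval 1 : ℤ) : R) - F.leadingCoeff
      = ∑ i ∈ range F.natDegree, (F.coeff i : R) := by
    simp only [eval_eq_sum_range, one_pow, mul_one, sum_range_succ, leadingCoeff]
    push_cast
    ring
  rw [aeval_eq_sum_coeff_mul_pow, sum_range_succ, coeff_natDegree, heval, sum_mul, add_comm]
  gcongr with i hi
  · exact_mod_cast hF i
  · exact Nat.le_sub_one_of_lt (mem_range.mp hi)

theorem two_le_aeval (hF : ∀ i, 0 ≤ F.coeff i) (hF0 : F.coeff 0 = 1) (hd : 0 < F.natDegree)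
    {q : R} (hq : 1 ≤ q) : 2 ≤ aeval q F := by
  have hc : (1 : R) ≤ F.leadingCoeff := by
    exact_mod_cast leadingCoeff_pos_of_coeff_nonneg hF (ne_zero_of_natDegree_gt hd)
  have := coeff_zero_add_leadingCoeff_mul_pow_le_aeval hF hd (zero_le_one.trans hq)
  rw [hF0, Int.cast_one] at this
  nlinarith [one_le_pow₀ (n := F.natDegree) hq]

end OrderedRing

theorem aeval_div_leadingCoeff_mul_pow_bounds [Field R] [LinearOrder R] [IsStrictOrderedRing R]
    (hF : ∀ i, 0 ≤ F.coeff i) (hd : 0 < F.natDegree) {q : R} (hq : 1 ≤ q) :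
    1 ≤ aeval q F / (F.leadingCoeff * q ^ F.natDegree) ∧
      aeval q F / (F.leadingCoeff * q ^ F.natDegree)
        ≤ 1 + ((F.eval 1 : ℤ) - F.leadingCoeff) / (F.leadingCoeff * q) := by
  have hc : (0 : R) < F.leadingCoeff := by
    exact_mod_cast leadingCoeff_pos_of_coeff_nonneg hF (ne_zero_of_natDegree_gt hd)
  have hq0 : 0 < q := zero_lt_one.trans_le hq
  have hden : 0 < (F.leadingCoeff : R) * q ^ F.natDegree := by positivity
  constructor
  · rw [one_le_div hden]
    have := coeff_zero_add_leadingCoeff_mul_pow_le_aeval hF hd hq0.le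
    linarith [Int.cast_nonneg (R := R) (hF 0)]
  · have hpow : q ^ F.natDegree = q ^ (F.natDegree - 1) * q := by
      rw [← pow_succ, Nat.sub_add_cancel hd]
    rw [div_le_iff₀ hden]
    convert aeval_le_leadingCoeff_mul_pow_add hF hq using 1
    rw [hpow]
    field_simp

end Polynomial

theorem Real.log_nonneg_and_le_of_le_one_add {r t : ℝ} (h1 : 1 ≤ r) (h2 : r ≤ 1 + t) :
    0 ≤ Real.log r ∧ Real.log r ≤ t :=
  ⟨Real.log_nonneg h1, by linarith [Real.log_le_sub_one_of_pos (zero_lt_one.trans_le h1)]⟩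

section Recurrence

variable {R : Type*} [Field R] [LinearOrder R] [IsStrictOrderedRing R]

theorem mul_le_of_mul_eq_sq_mul {a b c f : R} (ha : 0 < a) (hab : a ≤ b) (hf : 0 ≤ f)
    (h : c * a = b ^ 2 * f) : b * f ≤ c := by
  refine le_of_mul_le_mul_right ?_ ha
  calc b * f * a ≤ b * f * b :=
      mul_le_mul_of_nonneg_left hab (mul_nonneg (ha.le.trans hab) hf)
    _ = c * a := by rw [h]; ring

variable {f : R → R} (hf : ∀ q, 1 ≤ q → 2 ≤ f q) {x : ℕ → R}
  (hx0 : x 0 = 1) (hx1 : x 1 = 1) (hrec : ∀ n, x (n + 2) * x n = x (n + 1) ^ 2 * f (x (n + 1)))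
include hf hx0 hx1 hrec

theorem one_le_and_le_succ_of_rec (n : ℕ) : 1 ≤ x n ∧ x n ≤ x (n + 1) := by
  induction n with
  | zero => simp [hx0, hx1]
  | succ n ih =>
    have hb : 1 ≤ x (n + 1) := ih.1.trans ih.2
    have hf2 := hf _ hb
    refine ⟨hb, ?_⟩
    calc x (n + 1) ≤ x (n + 1) * f (x (n + 1)) :=
        le_mul_of_one_le_right (by linarith) (by linarith)
      _ ≤ x (n + 2) := mul_le_of_mul_eq_sq_mul (by linarith [ih.1]) ih.2 (by linarith) (hrec n)

theorem two_pow_le_of_rec (n : ℕ) : 2 ^ n ≤ x (n + 1) := by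
  induction n with
  | zero => simp [hx1]
  | succ n ih =>
    obtain ⟨ha, hab⟩ := one_le_and_le_succ_of_rec hf hx0 hx1 hrec n
    have hf2 := hf _ (ha.trans hab)
    calc (2 : R) ^ (n + 1) ≤ x (n + 1) * 2 := by rw [pow_succ]; gcongr
      _ ≤ x (n + 1) * f (x (n + 1)) := by gcongr; linarith
      _ ≤ x (n + 2) := mul_le_of_mul_eq_sq_mul (by linarith) hab (by linarith) (hrec n)

end Recurrence

theorem stmt_14_general (F : Polynomial ℤ)
    (hFnonneg : ∀ i, 0 ≤ F.coeff i) (hF0 : F.coeff 0 = 1) (hFdeg : 1 ≤ F.natDegree)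
    (x : ℕ → ℚ) (hx0 : x 0 = 1) (hx1 : x 1 = 1)
    (hrec : ∀ n, x (n + 2) * x n = (x (n + 1)) ^ 2 * Polynomial.aeval (x (n + 1)) F)
    (c : ℤ) (hc : c = F.leadingCoeff)
    (α : ℕ → ℝ)
    (hα : ∀ n, α n = Real.log ((Polynomial.aeval (x n) F : ℚ) /
      ((c : ℚ) * x n ^ F.natDegree))) :
    (∀ n : ℕ, 1 ≤ n →
      0 ≤ α n ∧ α n ≤ ((F.eval 1 : ℤ) - (c : ℤ)) / ((c : ℝ) * (x n : ℝ))) ∧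
    Tendsto α atTop (nhds 0) := by
  subst hc
  have hF2 : ∀ q : ℚ, 1 ≤ q → 2 ≤ aeval q F := fun q ↦ two_le_aeval hFnonneg hF0 hFdeg
  have hbound (n : ℕ) : 0 ≤ α n ∧
      α n ≤ ((F.eval 1 : ℤ) - F.leadingCoeff) / ((F.leadingCoeff : ℝ) * (x n : ℝ)) := by
    obtain ⟨h1, h2⟩ := aeval_div_leadingCoeff_mul_pow_bounds hFnonneg hFdeg
      (one_le_and_le_succ_of_rec hF2 hx0 hx1 hrec n).1
    rw [hα n]
    exact Real.log_nonneg_and_le_of_le_one_add (by exact_mod_cast h1) (by exact_mod_cast h2)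
  have hx_top : Tendsto (fun n ↦ (x n : ℝ)) atTop atTop := by
    rw [← tendsto_add_atTop_iff_nat 1]
    exact tendsto_atTop_mono (fun n ↦ by exact_mod_cast two_pow_le_of_rec hF2 hx0 hx1 hrec n)
      (tendsto_pow_atTop_atTop_of_one_lt one_lt_two)
  have hc : (0 : ℝ) < F.leadingCoeff := by
    exact_mod_cast
      leadingCoeff_pos_of_coeff_nonneg hFnonneg (ne_zero_of_natDegree_gt hFdeg)
  refine ⟨fun n _ ↦ hbound n, squeeze_zero (fun n ↦ (hbound n).1) (fun n ↦ (hbound n).2)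
    (tendsto_const_nhds.div_atTop (hx_top.const_mul_atTop hc))⟩

/-- with `c` the leading coefficient of `F` and
`α n = log (F(x n) / (c * x n ^ d))`, one has `0 ≤ α n ≤ (F(1) - c) / (c * x n)` for all
`n ≥ 1`; in particular `α n → 0` as `n → ∞`. -/
theorem stmt_14 (F : Polynomial ℤ)
    (hFnonneg : ∀ i, 0 ≤ F.coeff i) (hF0 : F.coeff 0 = 1) (hFdeg : 1 ≤ F.natDegree)
    (x : ℕ → ℚ) (hxpos : ∀ n, 0 < x n) (hx0 : x 0 = 1) (hx1 : x 1 = 1)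
    (hrec : ∀ n, x (n + 2) * x n = (x (n + 1)) ^ 2 * Polynomial.aeval (x (n + 1)) F)
    (c : ℤ) (hc : c = F.leadingCoeff)
    (α : ℕ → ℝ)
    (hα : ∀ n, α n = Real.log ((Polynomial.aeval (x n) F : ℚ) /
      ((c : ℚ) * x n ^ F.natDegree))) :
    (∀ n : ℕ, 1 ≤ n →
      0 ≤ α n ∧ α n ≤ ((F.eval 1 : ℤ) - (c : ℤ)) / ((c : ℝ) * (x n : ℝ))) ∧
    Tendsto α atTop (nhds 0) :=
  stmt_14_general F hFnonneg hF0 hFdeg x hx0 hx1 hrec c hc α hα
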